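/- arXiv:2505.12687 — 3 statements merged into one kernel-verified Lean document; each statement's English description precedes it below -/
import Mathlib

section
/- Fix real numbers a, b, s > 0 with a > sb. There exist a unique η₀ ∈ (1, 1+s) and a unique η₁ ∈ (1+s, +∞) such that H(x,0) < 0 for x ∈ (0, η₀) ∪ (η₁, +∞), H(η₀, 0) = H(η₁, 0) = 0, and H(x,0) > 0 for x ∈ (η₀, η₁). Moreover, ∂H/∂x(η₀, 0) > 0 and ∂H/∂x(η₁, 0) < 0. -/
/-!
For `x > 0` off the poles, `H(x, 0) = h(x) := (a + b) log (|x - 1| / (x + 1)) +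
b log ((x + 1 + s) / |x - 1 - s|)`, while `H(1, 0) = -∞` and `H(1 + s, 0) = +∞`. The derivative is
`h'(x) = 2 ((a - s b) x² - (1 + s) (a (1 + s) + b s)) / ((x² - 1) (x² - (1 + s)²))`.
On `(1, 1 + s)`, `h' > 0` and `h` runs from `-∞` to `+∞`, giving `η₀`. On `(1 + s, ∞)`, `h'`
changes sign once, at a point `X > 1 + s` because `a > s b`: `h` falls from `+∞` to `h(X)` and then
rises to its limit `0`, so `h < 0` on `[X, ∞)` and `h` has one zero `η₁ < X`. On `(0, 1)` a direct
estimate gives `h < 0`. Hence `H(x, 0)` has the sign of `(x - η₀) (η₁ - x)` for all `x > 0`.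
-/

/-- The logarithm with values in `ℝ ∪ {±∞}`: `elog 0 = −∞`, and `elog x = log x` for `x > 0`. -/
noncomputable def elog (x : ℝ) : EReal := if x ≤ 0 then ⊥ else ((Real.log x : ℝ) : EReal)

/-- The function
`H(x,y) = ((a+b)/2)·log(((x−1)²+y²)/((x+1)²+y²)) + (b/2)·log(((x+1+s)²+y²)/((x−1−s)²+y²))`,
with values in `ℝ ∪ {±∞}`. -/
noncomputable def Hfun (a b s x y : ℝ) : EReal :=
  (((a + b) / 2 : ℝ) : EReal) * (elog ((x - 1) ^ 2 + y ^ 2) - elog ((x + 1) ^ 2 + y ^ 2)) +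
    ((b / 2 : ℝ) : EReal) * (elog ((x + 1 + s) ^ 2 + y ^ 2) - elog ((x - 1 - s) ^ 2 + y ^ 2))


open Filter Set Topology SignType

section SignChange

variable {f f' : ℝ → ℝ} {l u : ℝ}

theorem StrictMonoOn.sign_eq_sign_sub {S : Set ℝ} {η : ℝ} (hf : StrictMonoOn f S) (hη : η ∈ S)
    (h0 : f η = 0) {x : ℝ} (hx : x ∈ S) : sign (f x) = sign (x - η) := by
  rcases lt_trichotomy x η with h | rfl | h
  · rw [sign_neg (sub_neg.2 h), sign_neg (h0 ▸ hf hx hη h)]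
  · rw [h0, sub_self]
  · rw [sign_pos (sub_pos.2 h), sign_pos (h0 ▸ hf hη hx h)]

theorem exists_mem_Ioo_sign_eq_sign_sub (hlu : l < u)
    (hf : ∀ x ∈ Ioo l u, HasDerivAt f (f' x) x) (hf' : ∀ x ∈ Ioo l u, 0 < f' x)
    (hl : ∀ᶠ x in 𝓝[>] l, f x < 0) (hu : ∀ᶠ x in 𝓝[<] u, 0 < f x) :
    ∃ η ∈ Ioo l u, ∀ x ∈ Ioo l u, sign (f x) = sign (x - η) := by
  have hcont : ContinuousOn f (Ioo l u) := fun x hx => (hf x hx).continuousAt.continuousWithinAt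
  have hmono : StrictMonoOn f (Ioo l u) :=
    strictMonoOn_of_hasDerivWithinAt_pos (convex_Ioo l u) hcont
      (fun x hx => (hf x (interior_subset hx)).hasDerivWithinAt)
      (fun x hx => hf' x (interior_subset hx))
  have := left_nhdsWithin_Ioo_neBot hlu
  have := right_nhdsWithin_Ioo_neBot hlu
  obtain ⟨η, hη, h0⟩ := isPreconnected_Ioo.intermediate_value₂_eventually₂
    (l₁ := 𝓝[Ioo l u] l) (l₂ := 𝓝[Ioo l u] u) inf_le_right inf_le_right hcont continuousOn_const
    (by rw [nhdsWithin_Ioo_eq_nhdsGT hlu]; exact hl.mono fun x hx => hx.le)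
    (by rw [nhdsWithin_Ioo_eq_nhdsLT hlu]; exact hu.mono fun x hx => hx.le)
  exact ⟨η, hη, fun x hx => hmono.sign_eq_sign_sub hη h0 hx⟩

theorem StrictMonoOn.lt_of_tendsto_atTop {α β : Type*} [LinearOrder α] [NoMaxOrder α]
    [TopologicalSpace β] [LinearOrder β] [OrderClosedTopology β] {g : α → β} {X : α} {c : β}
    (hg : StrictMonoOn g (Ici X)) (hlim : Tendsto g atTop (𝓝 c)) {x : α} (hx : X ≤ x) :
    g x < c := by
  have : Nonempty α := ⟨x⟩
  obtain ⟨y, hxy⟩ := exists_gt x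
  have hy : X ≤ y := hx.trans hxy.le
  refine (hg hx hy hxy).trans_le (ge_of_tendsto hlim ?_)
  filter_upwards [eventually_ge_atTop y] with z hz
  exact hg.monotoneOn hy (hy.trans hz) hz

end SignChange

/-- `H(x, 0)` away from `x = ±1, ±(1 + s)`; `Real.log` is even, so `log (x - 1)` stands for
`log |x - 1|`. -/
noncomputable def axisH (a b s x : ℝ) : ℝ :=
  (a + b) * (Real.log (x - 1) - Real.log (x + 1)) +
    b * (Real.log (x + 1 + s) - Real.log (x - 1 - s))

noncomputable def axisH' (a b s x : ℝ) : ℝ :=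
  (a + b) * (1 / (x - 1) - 1 / (x + 1)) + b * (1 / (x + 1 + s) - 1 / (x - 1 - s))

/-- The zero beyond `1 + s` of the numerator of `axisH'` (see `axisH'_eq`). -/
noncomputable def criticalPoint (a b s : ℝ) : ℝ :=
  √((1 + s) * (a * (1 + s) + b * s) / (a - s * b))

lemma elog_zero : elog 0 = ⊥ := if_pos le_rfl

lemma elog_of_pos {t : ℝ} (ht : 0 < t) : elog t = (Real.log t : EReal) := by
  rw [elog, if_neg ht.not_ge]

section Axis

variable {a b s : ℝ}

theorem Hfun_eq_axisH (hs : 0 ≤ s) {x : ℝ} (hx : 0 < x) (h1 : x ≠ 1) (h1s : x ≠ 1 + s) :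
    Hfun a b s x 0 = (axisH a b s x : EReal) := by
  have h₁ : x - 1 ≠ 0 := sub_ne_zero.2 h1
  have h₄ : x - 1 - s ≠ 0 := by rw [sub_sub]; exact sub_ne_zero.2 h1s
  simp only [Hfun, ne_eq, OfNat.ofNat_ne_zero, not_false_eq_true, zero_pow, add_zero]
  rw [elog_of_pos (by positivity), elog_of_pos (by positivity), elog_of_pos (by positivity),
    elog_of_pos (by positivity), Real.log_pow, Real.log_pow, Real.log_pow, Real.log_pow, axisH]
  norm_cast
  ring

theorem Hfun_one (hab : 0 < a + b) (hs : 0 < s) : Hfun a b s 1 0 = ⊥ := by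
  simp only [Hfun, ne_eq, OfNat.ofNat_ne_zero, not_false_eq_true, zero_pow, add_zero, sub_self,
    zero_sub, neg_sq]
  rw [elog_zero, elog_of_pos (by norm_num), elog_of_pos (by positivity),
    elog_of_pos (by positivity), EReal.bot_sub, EReal.coe_mul_bot_of_pos (by linarith),
    EReal.bot_add]

theorem Hfun_one_add (hb : 0 < b) (hs : 0 < s) : Hfun a b s (1 + s) 0 = ⊤ := by
  simp only [Hfun, ne_eq, OfNat.ofNat_ne_zero, not_false_eq_true, zero_pow, add_zero,
    add_sub_cancel_left, sub_self]
  rw [elog_zero, elog_of_pos (by positivity), elog_of_pos (by positivity),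
    elog_of_pos (by positivity), EReal.coe_sub_bot,
    EReal.mul_top_of_pos (by exact_mod_cast half_pos hb), ← EReal.coe_sub, ← EReal.coe_mul, EReal.coe_add_top]

theorem hasDerivAt_axisH (hs : 0 ≤ s) {x : ℝ} (hx : 0 < x) (h1 : x ≠ 1) (h1s : x ≠ 1 + s) :
    HasDerivAt (axisH a b s) (axisH' a b s x) x := by
  have h₄ : x - 1 - s ≠ 0 := by rw [sub_sub]; exact sub_ne_zero.2 h1s
  have hid := hasDerivAt_id' x
  exact ((((hid.sub_const 1).log (sub_ne_zero.2 h1)).sub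
    ((hid.add_const 1).log (by positivity))).const_mul (a + b)).add
    (((((hid.add_const 1).add_const s).log (by positivity)).sub
      (((hid.sub_const 1).sub_const s).log h₄)).const_mul b)

theorem deriv_toReal_Hfun (hs : 0 ≤ s) {x : ℝ} (hx : 0 < x) (h1 : x ≠ 1) (h1s : x ≠ 1 + s) :
    deriv (fun y => (Hfun a b s y 0).toReal) x = axisH' a b s x := by
  have heq : (fun y => (Hfun a b s y 0).toReal) =ᶠ[𝓝 x] axisH a b s := by
    filter_upwards [eventually_gt_nhds hx, eventually_ne_nhds h1, eventually_ne_nhds h1s]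
      with y hy hy1 hy1s
    rw [Hfun_eq_axisH hs hy hy1 hy1s, EReal.toReal_coe]
  rw [heq.deriv_eq, (hasDerivAt_axisH hs hx h1 h1s).deriv]

theorem axisH'_eq {x : ℝ} (h₁ : x - 1 ≠ 0) (h₂ : x + 1 ≠ 0) (h₃ : x + 1 + s ≠ 0)
    (h₄ : x - 1 - s ≠ 0) :
    axisH' a b s x =
      2 * ((a - s * b) * x ^ 2 - (1 + s) * (a * (1 + s) + b * s)) /
        ((x ^ 2 - 1) * (x ^ 2 - (1 + s) ^ 2)) := by
  have hD : (x ^ 2 - 1) * (x ^ 2 - (1 + s) ^ 2) =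
      (x - 1) * (x + 1) * ((x - 1 - s) * (x + 1 + s)) := by
    ring
  rw [hD, eq_div_iff (by positivity), axisH']
  field_simp
  ring

theorem axisH'_pos_of_mem_Ioo (ha : 0 < a) (hb : 0 < b) {x : ℝ} (hx : x ∈ Ioo 1 (1 + s)) :
    0 < axisH' a b s x := by
  obtain ⟨hx1, hx1s⟩ := hx
  have h₁ : 1 / (x + 1) < 1 / (x - 1) := one_div_lt_one_div_of_lt (by linarith) (by linarith)
  have h₂ : 1 / (x - 1 - s) < 1 / (x + 1 + s) :=
    (one_div_neg.2 (by linarith)).trans (one_div_pos.2 (by linarith))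
  unfold axisH'
  nlinarith [mul_pos (add_pos ha hb) (sub_pos.2 h₁), mul_pos hb (sub_pos.2 h₂)]

theorem one_add_lt_criticalPoint (hb : 0 < b) (hs : 0 < s) (hsb : s * b < a) :
    1 + s < criticalPoint a b s := by
  rw [criticalPoint, Real.lt_sqrt (by positivity), lt_div_iff₀ (by linarith)]
  nlinarith [mul_pos (mul_pos hb hs) (by positivity : 0 < (1 + s) * (2 + s))]

theorem axisH'_neg_of_mem_Ioo (hs : 0 ≤ s) (hsb : s * b < a) {x : ℝ}
    (hx : x ∈ Ioo (1 + s) (criticalPoint a b s)) : axisH' a b s x < 0 := by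
  obtain ⟨hx1s, hxX⟩ := hx
  rw [criticalPoint, Real.lt_sqrt (by linarith), lt_div_iff₀ (by linarith)] at hxX
  rw [axisH'_eq (ne_of_gt (by linarith)) (ne_of_gt (by linarith)) (ne_of_gt (by linarith))
    (ne_of_gt (by linarith))]
  exact div_neg_of_neg_of_pos (by linarith) (mul_pos (by nlinarith) (by nlinarith))

theorem axisH'_pos_of_criticalPoint_lt (hb : 0 < b) (hs : 0 < s) (hsb : s * b < a) {x : ℝ}
    (hx : criticalPoint a b s < x) : 0 < axisH' a b s x := by
  have hx1s := (one_add_lt_criticalPoint hb hs hsb).trans hx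
  rw [criticalPoint, Real.sqrt_lt' (by linarith), div_lt_iff₀ (by linarith)] at hx
  rw [axisH'_eq (ne_of_gt (by linarith)) (ne_of_gt (by linarith)) (ne_of_gt (by linarith))
    (ne_of_gt (by linarith))]
  exact div_pos (by linarith) (mul_pos (by nlinarith) (by nlinarith))

theorem tendsto_log_sub_nhdsNE (c : ℝ) :
    Tendsto (fun x => Real.log (x - c)) (𝓝[≠] c) atBot :=
  Real.tendsto_log_nhdsNE_zero.comp <| tendsto_nhdsWithin_iff.2
    ⟨by simpa using ((continuous_sub_right c).tendsto c).mono_left nhdsWithin_le_nhds,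
      eventually_nhdsWithin_of_forall fun _ hx => sub_ne_zero.2 hx⟩

theorem tendsto_axisH_nhdsNE_one (hab : 0 < a + b) (hs : 0 < s) :
    Tendsto (axisH a b s) (𝓝[≠] 1) atBot := by
  have hrest : ContinuousAt (fun x => -(a + b) * Real.log (x + 1) +
      b * (Real.log (x + 1 + s) - Real.log (x - 1 - s))) 1 := by
    fun_prop (disch := (intro h; linarith))
  refine (((tendsto_log_sub_nhdsNE 1).const_mul_atBot hab).atBot_add
    (hrest.tendsto.mono_left nhdsWithin_le_nhds)).congr fun x => ?_
  simp only [axisH]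
  ring

theorem tendsto_axisH_nhdsNE_one_add (hb : 0 < b) (hs : 0 < s) :
    Tendsto (axisH a b s) (𝓝[≠] (1 + s)) atTop := by
  have hrest : ContinuousAt (fun x => (a + b) * (Real.log (x - 1) - Real.log (x + 1)) +
      b * Real.log (x + 1 + s)) (1 + s) := by
    fun_prop (disch := (intro h; linarith))
  refine (((tendsto_log_sub_nhdsNE (1 + s)).const_mul_atBot_of_neg (neg_neg_of_pos hb)).atTop_add
    (hrest.tendsto.mono_left nhdsWithin_le_nhds)).congr fun x => ?_
  simp only [axisH, sub_sub x 1 s]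
  ring

theorem tendsto_axisH_atTop : Tendsto (axisH a b s) atTop (𝓝 0) := by
  have L := Real.tendsto_log_comp_add_sub_log
  have := (((L (-1)).sub (L 1)).const_mul (a + b)).add (((L (1 + s)).sub (L (-1 - s))).const_mul b)
  simp only [sub_zero, mul_zero, add_zero] at this
  refine this.congr fun x => ?_
  simp only [axisH]
  ring_nf

theorem axisH_neg_of_lt_one (ha : 0 < a) (hb : 0 ≤ b) (hs : 0 ≤ s) {x : ℝ} (hx0 : 0 < x)
    (hx1 : x < 1) : axisH a b s x < 0 := by
  have hA : Real.log (1 - x) < Real.log (x + 1) := Real.log_lt_log (by linarith) (by linarith)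
  -- With `A = log (1 - x) - log (x + 1) < 0`, the `b`-term is at most `-b * A` because
  -- `(x + 1 + s) * (1 - x) ≤ (x + 1) * (1 + s - x)`; hence `axisH a b s x ≤ a * A`.
  have hB : Real.log (x + 1 + s) + Real.log (1 - x) ≤ Real.log (x + 1) + Real.log (1 + s - x) := by
    rw [← Real.log_mul (by linarith) (by linarith), ← Real.log_mul (by linarith) (by linarith)]
    exact Real.log_le_log (by nlinarith) (by nlinarith)
  have e₁ : Real.log (x - 1) = Real.log (1 - x) := by rw [← Real.log_neg_eq_log, neg_sub]
  have e₂ : Real.log (x - 1 - s) = Real.log (1 + s - x) := by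
    rw [← Real.log_neg_eq_log]; ring_nf
  rw [axisH, e₁, e₂]
  nlinarith [mul_le_mul_of_nonneg_left hB hb, mul_pos ha (sub_pos.2 hA)]

theorem exists_sign_axisH_Ioo (ha : 0 < a) (hb : 0 < b) (hs : 0 < s) :
    ∃ η₀ ∈ Ioo 1 (1 + s), ∀ x ∈ Ioo 1 (1 + s), sign (axisH a b s x) = sign (x - η₀) :=
  exists_mem_Ioo_sign_eq_sign_sub (by linarith)
    (fun x hx => hasDerivAt_axisH hs.le (by linarith [hx.1]) hx.1.ne' hx.2.ne)
    (fun x hx => axisH'_pos_of_mem_Ioo ha hb hx)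
    ((tendsto_axisH_nhdsNE_one (by linarith) hs).mono_left (nhdsGT_le_nhdsNE 1)
      |>.eventually_lt_atBot 0)
    (((tendsto_axisH_nhdsNE_one_add hb hs).mono_left (nhdsLT_le_nhdsNE _)).eventually_gt_atTop 0)

theorem exists_sign_axisH_Ioi (hb : 0 < b) (hs : 0 < s) (hsb : s * b < a) :
    ∃ η₁ ∈ Ioo (1 + s) (criticalPoint a b s),
      ∀ x ∈ Ioi (1 + s), sign (axisH a b s x) = sign (η₁ - x) := by
  set X := criticalPoint a b s
  have hX : 1 + s < X := one_add_lt_criticalPoint hb hs hsb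
  have hderiv : ∀ x, 1 + s < x → HasDerivAt (axisH a b s) (axisH' a b s x) x := fun x hx =>
    hasDerivAt_axisH hs.le (by linarith) (ne_of_gt (by linarith)) hx.ne'
  have hmono : StrictMonoOn (axisH a b s) (Ici X) :=
    strictMonoOn_of_hasDerivWithinAt_pos (convex_Ici X)
      (fun x hx => (hderiv x (hX.trans_le hx)).continuousAt.continuousWithinAt)
      (fun x hx => (hderiv x (hX.trans (interior_Ici.subset hx))).hasDerivWithinAt)
      (fun x hx => axisH'_pos_of_criticalPoint_lt hb hs hsb (interior_Ici.subset hx))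
  have hneg : ∀ x, X ≤ x → axisH a b s x < 0 := fun x hx =>
    hmono.lt_of_tendsto_atTop tendsto_axisH_atTop hx
  obtain ⟨η₁, hη₁, hsign⟩ := exists_mem_Ioo_sign_eq_sign_sub (f := -axisH a b s) hX
    (fun x hx => (hderiv x hx.1).neg) (fun x hx => neg_pos.2 (axisH'_neg_of_mem_Ioo hs.le hsb hx))
    (((tendsto_axisH_nhdsNE_one_add hb hs).mono_left (nhdsGT_le_nhdsNE _)).eventually_gt_atTop 0
      |>.mono fun x hx => neg_neg_of_pos hx)
    ((((hderiv X hX).continuousAt.eventually_lt continuousAt_const (hneg X le_rfl)).filter_mono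
      nhdsWithin_le_nhds).mono fun x hx => neg_pos.2 hx)
  refine ⟨η₁, hη₁, fun x hx => ?_⟩
  rcases lt_or_ge x X with hxX | hxX
  · rw [← neg_sub x η₁, Left.sign_neg, ← hsign x ⟨hx, hxX⟩, Pi.neg_apply, Left.sign_neg, neg_neg]
  · rw [sign_neg (hneg x hxX), sign_neg (by linarith [hη₁.2])]

theorem exists_sign_Hfun (ha : 0 < a) (hb : 0 < b) (hs : 0 < s) (hsb : s * b < a) :
    ∃ η₀ ∈ Ioo 1 (1 + s), ∃ η₁ ∈ Ioo (1 + s) (criticalPoint a b s),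
      ∀ x, 0 < x → sign (Hfun a b s x 0) = sign ((x - η₀) * (η₁ - x)) := by
  obtain ⟨η₀, hη₀, hmid⟩ := exists_sign_axisH_Ioo ha hb hs
  obtain ⟨η₁, hη₁, htail⟩ := exists_sign_axisH_Ioi hb hs hsb
  refine ⟨η₀, hη₀, η₁, hη₁, fun x hx => ?_⟩
  obtain ⟨hη₀1, hη₀s⟩ := hη₀
  obtain ⟨hη₁s, -⟩ := hη₁
  rw [sign_mul]
  rcases lt_trichotomy x 1 with hx1 | rfl | hx1
  · rw [Hfun_eq_axisH hs.le hx hx1.ne (by linarith), EReal.sign_coe,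
      sign_neg (axisH_neg_of_lt_one ha hb.le hs.le hx hx1), sign_neg (by linarith : x - η₀ < 0),
      sign_pos (by linarith : 0 < η₁ - x), mul_one]
  · rw [Hfun_one (by linarith) hs, EReal.sign_bot, sign_neg (by linarith : 1 - η₀ < 0),
      sign_pos (by linarith : 0 < η₁ - 1), mul_one]
  rcases lt_trichotomy x (1 + s) with hx1s | rfl | hx1s
  · rw [Hfun_eq_axisH hs.le hx hx1.ne' hx1s.ne, EReal.sign_coe, hmid x ⟨hx1, hx1s⟩,
      sign_pos (by linarith : 0 < η₁ - x), mul_one]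
  · rw [Hfun_one_add hb hs, EReal.sign_top, sign_pos (by linarith : 0 < 1 + s - η₀),
      sign_pos (by linarith : 0 < η₁ - (1 + s)), mul_one]
  · rw [Hfun_eq_axisH hs.le hx hx1.ne' hx1s.ne', EReal.sign_coe, htail x hx1s,
      sign_pos (by linarith : 0 < x - η₀), one_mul]

end Axis

theorem stmt_16 (a b s : ℝ) (ha : 0 < a) (hb : 0 < b) (hs : 0 < s) (hsb : s * b < a) :
    ∃ η₀ ∈ Set.Ioo (1 : ℝ) (1 + s), ∃ η₁ ∈ Set.Ioi (1 + s),
      -- uniqueness of η₀ and η₁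
      (∀ x ∈ Set.Ioo (1 : ℝ) (1 + s), Hfun a b s x 0 = 0 → x = η₀) ∧
      (∀ x ∈ Set.Ioi (1 + s), Hfun a b s x 0 = 0 → x = η₁) ∧
      -- sign of H(x,0)
      (∀ x : ℝ, 0 < x → x < η₀ → Hfun a b s x 0 < 0) ∧
      (∀ x : ℝ, η₁ < x → Hfun a b s x 0 < 0) ∧
      Hfun a b s η₀ 0 = 0 ∧ Hfun a b s η₁ 0 = 0 ∧
      (∀ x : ℝ, η₀ < x → x < η₁ → 0 < Hfun a b s x 0) ∧
      -- ∂H/∂x(η₀,0) > 0 and ∂H/∂x(η₁,0) < 0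
      0 < deriv (fun x : ℝ => (Hfun a b s x 0).toReal) η₀ ∧
      deriv (fun x : ℝ => (Hfun a b s x 0).toReal) η₁ < 0 := by
  obtain ⟨η₀, ⟨hη₀1, hη₀s⟩, η₁, ⟨hη₁s, hη₁X⟩, hsign⟩ := exists_sign_Hfun ha hb hs hsb
  have hneg : ∀ x, 0 < x → (x - η₀) * (η₁ - x) < 0 → Hfun a b s x 0 < 0 := fun x hx h =>
    sign_eq_neg_one_iff.1 ((hsign x hx).trans (sign_neg h))
  have hpos : ∀ x, 0 < x → 0 < (x - η₀) * (η₁ - x) → 0 < Hfun a b s x 0 := fun x hx h =>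
    sign_eq_one_iff.1 ((hsign x hx).trans (sign_pos h))
  have hzero : ∀ x, 0 < x → (Hfun a b s x 0 = 0 ↔ (x - η₀) * (η₁ - x) = 0) := fun x hx => by
    rw [← sign_eq_zero_iff, hsign x hx, sign_eq_zero_iff]
  refine ⟨η₀, ⟨hη₀1, hη₀s⟩, η₁, hη₁s, fun x hx h0 => ?_, fun x hx h0 => ?_,
    fun x hx hxη => hneg x hx (mul_neg_of_neg_of_pos (by linarith) (by linarith)),
    fun x hxη => hneg x (by linarith) (mul_neg_of_pos_of_neg (by linarith) (by linarith)),
    (hzero η₀ (by linarith)).2 (by ring), (hzero η₁ (by linarith)).2 (by ring),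
    fun x h₀ h₁ => hpos x (by linarith) (mul_pos (by linarith) (by linarith)), ?_, ?_⟩
  · rcases mul_eq_zero.1 ((hzero x (by linarith [hx.1])).1 h0) with h | h <;> linarith [hx.2]
  · rcases mul_eq_zero.1 ((hzero x (by linarith [mem_Ioi.1 hx])).1 h0) with h | h <;>
      linarith [mem_Ioi.1 hx]
  · rw [deriv_toReal_Hfun hs.le (by linarith) hη₀1.ne' hη₀s.ne]
    exact axisH'_pos_of_mem_Ioo ha hb ⟨hη₀1, hη₀s⟩
  · rw [deriv_toReal_Hfun hs.le (by linarith) (ne_of_gt (by linarith)) hη₁s.ne']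
    exact axisH'_neg_of_mem_Ioo hs.le hsb ⟨hη₁s, hη₁X⟩
end

section
/- Fix real numbers a, b, s > 0 with a > sb. The function ψ(y) := 2(a+b)·arctan(1/y) + 2b·arctan(y/(1+s)) is strictly decreasing on (0, +∞), with ψ(y) → (a+b)π as y → 0⁺ and ψ(y) → bπ as y → +∞. -/
/-! Since `arctan (1 / y) = π / 2 - arctan y` for `y > 0`, on `(0, ∞)` the function equals
`(a + b) π + F y` with `F y = 2 b arctan (y / (1 + s)) - 2 (a + b) arctan y`. Now `F` is smooth on
all of `ℝ`, `F 0 = 0`, `F y → -a π` as `y → ∞`, and `F` is strictly decreasing: `F' y < 0` amounts to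
`b (1 + s) (1 + y²) < (a + b) ((1 + s)² + y²)`, which holds for every `y` as soon as `s b < a`. -/

open Filter Real Set Topology

theorem Real.arctan_one_div_of_pos {y : ℝ} (hy : 0 < y) : arctan (1 / y) = π / 2 - arctan y := by
  rw [one_div, arctan_inv_of_pos hy]

theorem Real.hasDerivAt_arctan_div_const (c y : ℝ) :
    HasDerivAt (fun y => arctan (y / c)) (c / (c ^ 2 + y ^ 2)) y := by
  rcases eq_or_ne c 0 with rfl | hc
  · simpa using hasDerivAt_const y (0 : ℝ)
  · convert ((hasDerivAt_id' y).div_const c).arctan using 1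
    field_simp

section ArctanDifference

variable {α β c : ℝ}

theorem strictAnti_mul_arctan_div_sub_mul_arctan (hc : 0 < c) (hβ : β < α * c)
    (hβc : β * c ≤ α) :
    StrictAnti fun y => β * arctan (y / c) - α * arctan y := by
  refine strictAnti_of_hasDerivAt_neg (fun y =>
    ((hasDerivAt_arctan_div_const c y).const_mul β).sub ((hasDerivAt_arctan y).const_mul α))
    fun y => ?_
  have hcross : β * c * (1 + y ^ 2) < α * (c ^ 2 + y ^ 2) := by
    linarith [mul_lt_mul_of_pos_right hβ hc, mul_le_mul_of_nonneg_right hβc (sq_nonneg y)]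
  rw [sub_neg, mul_div_assoc', mul_one_div, div_lt_div_iff₀ (by positivity) (by positivity)]
  linarith

theorem tendsto_mul_arctan_div_sub_mul_arctan_atTop (hc : 0 < c) :
    Tendsto (fun y => β * arctan (y / c) - α * arctan y) atTop (𝓝 ((β - α) * (π / 2))) := by
  have harctan := tendsto_arctan_atTop.mono_right nhdsWithin_le_nhds
  have hdiv := harctan.comp (tendsto_id.atTop_div_const hc)
  simpa [sub_mul] using (hdiv.const_mul β).sub (harctan.const_mul α)

end ArctanDifference

theorem stmt_18_general (a b s : ℝ) (hb : 0 < b) (hs : 0 < s) (hsb : s * b < a) :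
    StrictAntiOn (fun y : ℝ => 2 * (a + b) * Real.arctan (1 / y) +
        2 * b * Real.arctan (y / (1 + s))) (Set.Ioi 0) ∧
    Tendsto (fun y : ℝ => 2 * (a + b) * Real.arctan (1 / y) + 2 * b * Real.arctan (y / (1 + s)))
      (nhdsWithin 0 (Set.Ioi 0)) (nhds ((a + b) * Real.pi)) ∧
    Tendsto (fun y : ℝ => 2 * (a + b) * Real.arctan (1 / y) + 2 * b * Real.arctan (y / (1 + s)))
      atTop (nhds (b * Real.pi)) := by
  have ha : 0 < a := (mul_pos hs hb).trans hsb
  set F : ℝ → ℝ := fun y => 2 * b * arctan (y / (1 + s)) - 2 * (a + b) * arctan y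
  have hψ : EqOn (fun y => (a + b) * π + F y)
      (fun y : ℝ => 2 * (a + b) * arctan (1 / y) + 2 * b * arctan (y / (1 + s))) (Ioi 0) :=
    fun y hy => by simp only [F, arctan_one_div_of_pos (mem_Ioi.mp hy)]; ring
  have hF_anti : StrictAnti F :=
    strictAnti_mul_arctan_div_sub_mul_arctan (by linarith) (by nlinarith) (by nlinarith)
  have hF_zero : Tendsto F (𝓝[>] 0) (𝓝 0) := by
    have hF_cont : Continuous F := by fun_prop
    simpa [F] using (hF_cont.tendsto 0).mono_left nhdsWithin_le_nhds
  refine ⟨(hF_anti.const_add _ |>.strictAntiOn _).congr hψ, ?_, ?_⟩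
  · refine Tendsto.congr' (eventuallyEq_nhdsWithin_of_eqOn hψ) ?_
    simpa using hF_zero.const_add ((a + b) * π)
  · refine Tendsto.congr' (eventually_gt_atTop 0 |>.mono hψ) ?_
    convert (tendsto_mul_arctan_div_sub_mul_arctan_atTop (α := 2 * (a + b)) (β := 2 * b)
      (c := 1 + s) (by linarith)).const_add ((a + b) * π) using 2
    ring

theorem stmt_18 (a b s : ℝ) (ha : 0 < a) (hb : 0 < b) (hs : 0 < s) (hsb : s * b < a) :
    StrictAntiOn (fun y : ℝ => 2 * (a + b) * Real.arctan (1 / y) +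
        2 * b * Real.arctan (y / (1 + s))) (Set.Ioi 0) ∧
    Tendsto (fun y : ℝ => 2 * (a + b) * Real.arctan (1 / y) + 2 * b * Real.arctan (y / (1 + s)))
      (nhdsWithin 0 (Set.Ioi 0)) (nhds ((a + b) * Real.pi)) ∧
    Tendsto (fun y : ℝ => 2 * (a + b) * Real.arctan (1 / y) + 2 * b * Real.arctan (y / (1 + s)))
      atTop (nhds (b * Real.pi)) :=
  stmt_18_general a b s hb hs hsb
end

section
/- Let k ≥ 2, q ≥ 3, and r > 2k be integers, and consider the polynomial P(z) := (z+r)^{q+k}(z−q)^k − z^{q+k}(z+q+r)^k. Then P has no multiple complex zero, and P has exactly k zeros in the open half-plane {z ∈ ℂ : Re z > −r/2}. -/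
/-!
On the line `Re z = -r/2` the numbers `z + r` and `z + q + r` lie in the right half-plane, and
`z = -conj (z + r)`, `z - q = -conj (z + q + r)`. So the two products defining `P z` have equal
modulus and `P (-r/2 + it) = 0` is a condition on arguments, `Phi t ∈ 2πℤ`, where `Phi` decreases
strictly from `2πq` to `0`: exactly `q - 1` zeros lie on the line.

At a double zero `z` the logarithmic derivatives of the two products agree as well, which forces
`z (z + r) = (q + k) r (q + r) / (r - 2k)`. Then `z` or `-r - z` is a real `x > q`, and the log of
`(x + r)^(q+k) (x - q)^k / (x^(q+k) (x + q + r)^k)` is strictly decreasing from `x` on towards its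
limit `0`, hence positive: `x` is no zero.

As `P (-r - z) = ± P z`, the remaining zeros pair up across the line, and `P` has degree
`q + 2k - 1` with simple zeros, so `k` of them lie to the right of the line.
-/

open Polynomial Filter Topology Real Set
open scoped ComplexConjugate

lemma StrictAntiOn.lt_of_tendsto_atTop {f : ℝ → ℝ} {a L : ℝ} (hf : StrictAntiOn f (Ici a))
    (hL : Tendsto f atTop (𝓝 L)) : L < f a :=
  calc L ≤ f (a + 1) := le_of_tendsto hL <| (eventually_ge_atTop (a + 1)).mono fun y hy =>
          hf.antitoneOn (mem_Ici.2 (by linarith)) (mem_Ici.2 (by linarith)) hy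
    _ < f a := hf self_mem_Ici (by simp) (by linarith)

lemma StrictAnti.range_eq_Ioo {α : Type*} [LinearOrder α] [TopologicalSpace α]
    [OrderClosedTopology α] {f : ℝ → α} (hf : StrictAnti f) (hc : Continuous f) {a b : α}
    (ha : Tendsto f atTop (𝓝 a)) (hb : Tendsto f atBot (𝓝 b)) : range f = Ioo a b := by
  refine Subset.antisymm ?_ ?_
  · rintro _ ⟨t, rfl⟩
    exact ⟨(hf.antitone.le_of_tendsto ha (t + 1)).trans_lt (hf (lt_add_one t)),
      (hf (sub_one_lt t)).trans_le (hf.antitone.ge_of_tendsto hb (t - 1))⟩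
  · simpa using isPreconnected_univ.intermediate_value_Ioo (by simp) (by simp)
      hc.continuousOn ha hb

lemma Polynomial.Monic.natDegree_sub_of_nextCoeff_ne {R : Type*} [CommRing R] {f g : R[X]}
    (hf : f.Monic) (hg : g.Monic) (hfg : f.natDegree = g.natDegree)
    (hne : f.nextCoeff ≠ g.nextCoeff) : (f - g).natDegree = f.natDegree - 1 := by
  nontriviality R
  have hpos : 0 < f.natDegree := by
    by_contra h
    simp_all [nextCoeff]
  have hcoeff : (f - g).coeff (f.natDegree - 1) ≠ 0 := by
    rwa [coeff_sub, ← nextCoeff_of_natDegree_pos hpos, hfg,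
      ← nextCoeff_of_natDegree_pos (hfg ▸ hpos), sub_ne_zero]
  have hlt : (f - g).natDegree < f.natDegree :=
    natDegree_lt_natDegree (fun h => hcoeff (by simp [h])) <| degree_sub_lt_left
      (by rw [degree_eq_natDegree hf.ne_zero, degree_eq_natDegree hg.ne_zero, hfg]) hf.ne_zero
      (by rw [hf.leadingCoeff, hg.leadingCoeff])
  have := le_natDegree_of_ne_zero hcoeff
  omega

lemma Polynomial.ncard_setOf_isRoot_eq_natDegree {K : Type*} [Field K] [IsAlgClosed K] {p : K[X]}
    (hp : p ≠ 0) (hmult : ∀ z, p.rootMultiplicity z ≤ 1) :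
    {z | p.IsRoot z}.ncard = p.natDegree := by
  classical
  have hnodup : p.roots.Nodup := Multiset.nodup_iff_count_le_one.2 fun z => by
    rw [count_roots]; exact hmult z
  have hset : {z | p.IsRoot z} = ↑p.roots.toFinset := by ext z; simp [mem_roots hp]
  rw [hset, ncard_coe_finset, Multiset.toFinset_card_of_nodup hnodup,
    IsAlgClosed.card_roots_eq_natDegree]

lemma ncard_eq_two_mul_ncard_re_gt_add {S : Set ℂ} (hS : S.Finite) (a : ℝ)
    (hsymm : ∀ z ∈ S, (a : ℂ) - z ∈ S) :
    S.ncard = 2 * {z ∈ S | a / 2 < z.re}.ncard + {z ∈ S | z.re = a / 2}.ncard := by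
  set R := {z ∈ S | a / 2 < z.re}
  have hL : {z ∈ S | z.re < a / 2} = (fun z => (a : ℂ) - z) '' R := by
    ext z
    refine ⟨fun ⟨hz, hre⟩ => ⟨a - z, ⟨hsymm z hz, ?_⟩, by ring⟩, ?_⟩
    · rw [Complex.sub_re, Complex.ofReal_re]; linarith
    · rintro ⟨w, ⟨hw, hre⟩, rfl⟩
      exact ⟨hsymm w hw, by rw [Complex.sub_re, Complex.ofReal_re]; linarith⟩
  have hsplit : S = R ∪ {z ∈ S | z.re = a / 2} ∪ {z ∈ S | z.re < a / 2} := by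
    ext z
    simp only [R, mem_union, mem_ofPred_eq]
    constructor
    · intro hz
      rcases lt_trichotomy z.re (a / 2) with h | h | h <;> simp [hz, h]
    · rintro ((⟨hz, -⟩ | ⟨hz, -⟩) | ⟨hz, -⟩) <;> exact hz
  have hfin : ∀ p : ℂ → Prop, {z ∈ S | p z}.Finite := fun p => hS.subset fun z hz => hz.1
  calc S.ncard = (R ∪ {z ∈ S | z.re = a / 2} ∪ {z ∈ S | z.re < a / 2}).ncard :=
        congrArg ncard hsplit
    _ = _ := by
      rw [ncard_union_eq _ ((hfin _).union (hfin _)) (hfin _), ncard_union_eq _ (hfin _) (hfin _),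
        hL, ncard_image_of_injective _ (sub_right_injective)]
      · ring
      · exact disjoint_left.2 fun z hz hz' => by linarith [hz.2, hz'.2]
      · exact disjoint_left.2 fun z hz hz' => by
          rcases hz with ⟨-, h⟩ | ⟨-, h⟩ <;> linarith [hz'.2]

lemma Complex.arg_eq_arctan {z : ℂ} (hz : 0 < z.re) : z.arg = Real.arctan (z.im / z.re) := by
  have h := abs_lt.1 (Complex.abs_arg_lt_pi_div_two_iff.2 (.inl hz))
  rw [← Complex.tan_arg, Real.arctan_tan h.1 h.2]

lemma Complex.pow_mul_neg_conj_pow_eq_iff {A B : ℂ} (hA : A ≠ 0) (hB : B ≠ 0) (p n : ℕ) :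
    A ^ (p + n) * (-conj B) ^ n = (-conj A) ^ (p + n) * B ^ n ↔
      ∃ j : ℤ, p * π - 2 * (p + n) * A.arg + 2 * n * B.arg = 2 * π * j := by
  have hA' : -conj A ≠ 0 := by simpa
  have hB' : -conj B ≠ 0 := by simpa
  rw [ext_norm_arg_iff, ← arg_coe_angle_eq_iff,
    arg_mul_coe_angle (pow_ne_zero _ hA) (pow_ne_zero _ hB'),
    arg_mul_coe_angle (pow_ne_zero _ hA') (pow_ne_zero _ hB), arg_pow_coe_angle, arg_pow_coe_angle,
    arg_pow_coe_angle, arg_pow_coe_angle, arg_neg_coe_angle (by simpa),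
    arg_neg_coe_angle (by simpa), arg_conj_coe_angle, arg_conj_coe_angle]
  simp only [norm_mul, norm_pow, norm_neg, norm_conj, true_and]
  have hθ : ((p * π - 2 * (p + n) * A.arg + 2 * n * B.arg : ℝ) : Real.Angle) =
      (p + n) • (-(A.arg : Real.Angle) + π) + n • (B.arg : Real.Angle) -
        ((p + n) • (A.arg : Real.Angle) + n • (-(B.arg : Real.Angle) + π)) := by
    rw [show (p * π - 2 * (p + n) * A.arg + 2 * n * B.arg : ℝ) = ((p : ℕ) : ℝ) * π -
        ((2 * (p + n) : ℕ) : ℝ) * A.arg + ((2 * n : ℕ) : ℝ) * B.arg by push_cast; ring,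
      Real.Angle.coe_add, Real.Angle.coe_sub, Real.Angle.natCast_mul_eq_nsmul,
      Real.Angle.natCast_mul_eq_nsmul, Real.Angle.natCast_mul_eq_nsmul]
    module
  rw [eq_comm, ← sub_eq_zero, ← hθ, Real.Angle.coe_eq_zero_iff]
  refine exists_congr fun j => ?_
  rw [zsmul_eq_mul, eq_comm, mul_comm (j : ℝ)]

lemma Real.hasDerivAt_arctan_div {c : ℝ} (hc : c ≠ 0) (t : ℝ) :
    HasDerivAt (fun t => arctan (t / c)) (c / (c ^ 2 + t ^ 2)) t := by
  refine ((hasDerivAt_id' t).div_const c).arctan.congr_deriv ?_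
  field_simp

lemma exists_gt_mul_add_eq {a r d : ℝ} (ha : 0 ≤ a) (hr : 0 ≤ r) (had : a * (a + r) < d) :
    ∃ x, a < x ∧ x * (x + r) = d := by
  have hd : 0 ≤ d + r ^ 2 / 4 := by nlinarith
  refine ⟨√(d + r ^ 2 / 4) - r / 2, ?_, ?_⟩
  · have := (lt_sqrt (by linarith : 0 ≤ a + r / 2)).2
      (by nlinarith : (a + r / 2) ^ 2 < d + r ^ 2 / 4)
    linarith
  · linear_combination sq_sqrt hd

lemma eq_or_eq_neg_sub_of_mul_add_eq {R : Type*} [CommRing R] [NoZeroDivisors R] {z w r : R}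
    (h : z * (z + r) = w * (w + r)) : z = w ∨ z = -r - w := by
  have : (z - w) * (z - (-r - w)) = 0 := by linear_combination h
  rcases mul_eq_zero.1 this with h | h
  exacts [.inl (sub_eq_zero.1 h), .inr (sub_eq_zero.1 h)]

section LogRatio

variable {Q K R : ℝ}

noncomputable def logRatio (Q K R y : ℝ) : ℝ :=
  (Q + K) * (log (y + R) - log y) - K * (log (y + Q + R) - log (y - Q))

lemma tendsto_logRatio_atTop : Tendsto (logRatio Q K R) atTop (𝓝 0) := by
  have hR := tendsto_log_comp_add_sub_log R
  have hQR := (tendsto_log_comp_add_sub_log (2 * Q + R)).comp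
    (tendsto_atTop_add_const_right atTop (-Q) tendsto_id)
  have := (hR.const_mul (Q + K)).sub (hQR.const_mul K)
  simp only [mul_zero, sub_zero] at this
  refine this.congr fun y => ?_
  simp only [logRatio, Function.comp, id]
  ring_nf

lemma hasDerivAt_logRatio (hQ : 0 ≤ Q) (hR : 0 ≤ R) {y : ℝ} (hy : Q < y) :
    HasDerivAt (logRatio Q K R)
      (K * (2 * Q + R) / ((y + Q + R) * (y - Q)) - (Q + K) * R / (y * (y + R))) y := by
  have h₁ := ((hasDerivAt_id' y).add_const R).log (by linarith)
  have h₂ := (hasDerivAt_id' y).log (by linarith)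
  have h₃ := (((hasDerivAt_id' y).add_const Q).add_const R).log (by linarith)
  have h₄ := ((hasDerivAt_id' y).sub_const Q).log (by linarith)
  have : y ≠ 0 := by linarith
  have : y + R ≠ 0 := by linarith
  have : y + Q + R ≠ 0 := by linarith
  have : y - Q ≠ 0 := by linarith
  refine (((h₁.sub h₂).const_mul (Q + K)).sub ((h₃.sub h₄).const_mul K)).congr_deriv ?_
  field_simp
  ring

lemma logRatio_strictAntiOn (hQ : 0 < Q) (hR : 0 ≤ R) (hKR : 2 * K < R) {x : ℝ} (hx : Q < x)
    (hcrit : (Q + K) * R * (Q + R) ≤ (R - 2 * K) * (x * (x + R))) :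
    StrictAntiOn (logRatio Q K R) (Ici x) := by
  refine strictAntiOn_of_deriv_neg (convex_Ici x)
    (fun y hy => (hasDerivAt_logRatio hQ.le hR (hx.trans_le hy)).continuousAt.continuousWithinAt)
    fun y hy => ?_
  rw [interior_Ici, mem_Ioi] at hy
  rw [(hasDerivAt_logRatio hQ.le hR (hx.trans hy)).deriv, sub_neg,
    div_lt_div_iff₀ (by nlinarith) (by nlinarith)]
  have hgrow : x * (x + R) < y * (y + R) := by nlinarith
  have hcrit' : (Q + K) * R * (Q + R) < (R - 2 * K) * (y * (y + R)) :=
    hcrit.trans_lt (mul_lt_mul_of_pos_left hgrow (by linarith))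
  -- `(y + Q + R) * (y - Q) = y * (y + R) - Q * (Q + R)` turns the claim into `hcrit'` times `Q`
  nlinarith [mul_lt_mul_of_pos_left hcrit' hQ]

lemma logRatio_pos (hQ : 0 < Q) (hR : 0 ≤ R) (hKR : 2 * K < R) {x : ℝ} (hx : Q < x)
    (hcrit : (Q + K) * R * (Q + R) ≤ (R - 2 * K) * (x * (x + R))) : 0 < logRatio Q K R x :=
  (logRatio_strictAntiOn hQ hR hKR hx hcrit).lt_of_tendsto_atTop tendsto_logRatio_atTop

end LogRatio

lemma pow_mul_pow_lt_of_critical {k q : ℕ} {r x : ℝ} (hq : 0 < q) (hkr : 2 * k < r) (hx : q < x)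
    (hcrit : (q + k) * r * (q + r) ≤ (r - 2 * k) * (x * (x + r))) :
    x ^ (q + k) * (x + q + r) ^ k < (x + r) ^ (q + k) * (x - q) ^ k := by
  have hr : 0 ≤ r := by linarith [(Nat.cast_nonneg k : (0 : ℝ) ≤ k)]
  have hpos := logRatio_pos (by exact_mod_cast hq) hr hkr hx hcrit
  have hq' : (0 : ℝ) < q := by exact_mod_cast hq
  have h₁ : 0 < x := hq'.trans hx
  have h₂ : 0 < x - q := sub_pos.2 hx
  have h₃ : 0 < x + r := by linarith
  have h₄ : 0 < x + q + r := by linarith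
  rw [← log_lt_log_iff (by positivity) (by positivity), log_mul (by positivity) (by positivity),
    log_mul (by positivity) (by positivity), log_pow, log_pow, log_pow, log_pow]
  simp only [logRatio] at hpos
  push_cast
  linarith

namespace PowerDifference

noncomputable def P (k q r : ℕ) : ℂ[X] :=
  (X + C (r : ℂ)) ^ (q + k) * (X - C (q : ℂ)) ^ k - X ^ (q + k) * (X + C ((q : ℂ) + r)) ^ k

variable {k q r : ℕ}

lemma eval_P (z : ℂ) :
    (P k q r).eval z = (z + r) ^ (q + k) * (z - q) ^ k - z ^ (q + k) * (z + q + r) ^ k := by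
  simp [P, add_assoc]

lemma eval_derivative_P (z : ℂ) :
    (derivative (P k q r)).eval z =
      (q + k) * (z + r) ^ (q + k - 1) * (z - q) ^ k + k * (z + r) ^ (q + k) * (z - q) ^ (k - 1)
      - ((q + k) * z ^ (q + k - 1) * (z + q + r) ^ k
        + k * z ^ (q + k) * (z + q + r) ^ (k - 1)) := by
  simp only [P, map_natCast, map_add, derivative_sub, derivative_mul, derivative_pow, Nat.cast_add,
    derivative_X, derivative_natCast, add_zero, mul_one, sub_zero, eval_sub, eval_add,
    eval_mul, eval_natCast, eval_pow, eval_X, add_assoc]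
  ring

lemma eval_P_neg_sub (z : ℂ) : (P k q r).eval (-r - z) = (-1) ^ (q + 1) * (P k q r).eval z := by
  simp only [eval_P]
  rw [show -(r : ℂ) - z + r = -z by ring, show -(r : ℂ) - z - q = -(z + q + r) by ring,
    show -(r : ℂ) - z + q + r = -(z - q) by ring, show -(r : ℂ) - z = -(z + r) by ring]
  rw [neg_pow z, neg_pow (z + q + r), neg_pow (z + r), neg_pow (z - q)]
  have hsign : (-1 : ℂ) ^ (q + k) * (-1) ^ k = (-1) ^ q := by
    rw [mul_comm, ← pow_add, show k + (q + k) = q + 2 * k by ring, pow_add, pow_mul]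
    simp
  linear_combination (z ^ (q + k) * (z + q + r) ^ k - (z + r) ^ (q + k) * (z - q) ^ k) * hsign

lemma isRoot_neg_sub {z : ℂ} (hz : (P k q r).IsRoot z) : (P k q r).IsRoot (-r - z) := by
  rw [IsRoot, eval_P_neg_sub, hz.eq_zero, mul_zero]

lemma natDegree_P (hq : 0 < q) (hr : 2 * k < r) : (P k q r).natDegree = q + 2 * k - 1 := by
  have hA : ((X + C (r : ℂ)) ^ (q + k) * (X - C (q : ℂ)) ^ k).Monic :=
    ((monic_X_add_C _).pow _).mul ((monic_X_sub_C _).pow _)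
  have hB : (X ^ (q + k) * (X + C ((q : ℂ) + r)) ^ k).Monic :=
    (monic_X_pow _).mul ((monic_X_add_C _).pow _)
  have hnX : (X : ℂ[X]).nextCoeff = 0 := by simpa using nextCoeff_X_add_C (0 : ℂ)
  have hdA : ((X + C (r : ℂ)) ^ (q + k) * (X - C (q : ℂ)) ^ k).natDegree = q + 2 * k := by
    rw [((monic_X_add_C _).pow _).natDegree_mul ((monic_X_sub_C _).pow _)]
    simp only [natDegree_pow, natDegree_X_add_C, natDegree_X_sub_C]
    ring
  have hdB : (X ^ (q + k) * (X + C ((q : ℂ) + r)) ^ k).natDegree = q + 2 * k := by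
    rw [(monic_X_pow _).natDegree_mul ((monic_X_add_C _).pow _)]
    simp only [natDegree_pow, natDegree_X_add_C, natDegree_X]
    ring
  rw [P, hA.natDegree_sub_of_nextCoeff_ne hB (hdA.trans hdB.symm), hdA]
  · rw [Monic.nextCoeff_mul ((monic_X_add_C _).pow _) ((monic_X_sub_C _).pow _),
      Monic.nextCoeff_mul (monic_X_pow _) ((monic_X_add_C _).pow _),
      Monic.nextCoeff_pow (monic_X_add_C _), Monic.nextCoeff_pow (monic_X_sub_C _),
      Monic.nextCoeff_pow monic_X, Monic.nextCoeff_pow (monic_X_add_C _), nextCoeff_X_add_C,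
      nextCoeff_X_sub_C, nextCoeff_X_add_C, hnX]
    simp only [nsmul_eq_mul, Nat.cast_add, mul_zero, zero_add]
    intro h
    have : (q : ℂ) * ((r : ℂ) - (2 * k : ℕ)) = 0 := by push_cast; linear_combination h
    rcases mul_eq_zero.1 this with h | h
    · exact hq.ne' (by exact_mod_cast h)
    · exact hr.ne (by exact_mod_cast (sub_eq_zero.1 h).symm)

lemma mul_add_eq_of_isRoot_derivative (hk : 0 < k) (hq : 0 < q) (hr : 0 < r) {z : ℂ}
    (h₀ : (P k q r).IsRoot z) (h₁ : (derivative (P k q r)).IsRoot z) :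
    ((r : ℂ) - 2 * k) * (z * (z + r)) = (q + k) * r * (q + r) := by
  have hq' : (q : ℂ) ≠ 0 := by exact_mod_cast hq.ne'
  have hqr : 2 * (q : ℂ) + r ≠ 0 := by exact_mod_cast (by omega : 2 * q + r ≠ 0)
  have E₀ := h₀.eq_zero
  have E₁ := h₁.eq_zero
  rw [eval_P] at E₀
  rw [eval_derivative_P] at E₁
  have hz : z ≠ 0 := by
    rintro rfl
    simp_all
  have hz' : z + q + r ≠ 0 := by
    intro h
    rw [h, zero_pow hk.ne', mul_zero, sub_zero] at E₀
    rcases mul_eq_zero.1 E₀ with h' | h'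
    · exact hq' (by linear_combination -(eq_zero_of_pow_eq_zero h') + h)
    · exact hqr (by linear_combination h - eq_zero_of_pow_eq_zero h')
  have hpow : ∀ (m : ℕ) (w : ℂ), (m : ℂ) * (w ^ (m - 1) * w) = m * w ^ m := by
    rintro (_ | m) w <;> simp [pow_succ]
  have ha := hpow (q + k) (z + r)
  have hb := hpow k (z - q)
  have hc := hpow (q + k) z
  have hd := hpow k (z + q + r)
  push_cast at ha hc
  have hV : z ^ (q + k) * (z + q + r) ^ k ≠ 0 := by positivity
  -- multiply `P' z = 0` by `(z + r) (z - q) z (z + q + r)` and substitute `P z = 0`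
  have key : z ^ (q + k) * (z + q + r) ^ k *
      (q * ((q + k) * r * (q + r) - ((r : ℂ) - 2 * k) * (z * (z + r)))) = 0 := by
    linear_combination (z + r) * (z - q) * z * (z + q + r) * E₁
      - ((q + k) * (z - q) * z * (z + q + r) + k * (z + r) * z * (z + q + r)) * E₀
      - (z - q) ^ k * ((z - q) * z * (z + q + r)) * ha
      - (z + r) ^ (q + k) * ((z + r) * z * (z + q + r)) * hb
      + (z + q + r) ^ k * ((z + r) * (z - q) * (z + q + r)) * hc
      + z ^ (q + k) * ((z + r) * (z - q) * z) * hd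
  have := (mul_eq_zero.1 ((mul_eq_zero.1 key).resolve_left hV)).resolve_left hq'
  linear_combination -this

lemma not_isRoot_ofReal (hq : 0 < q) (hr : 2 * k < r) {x : ℝ} (hx : q < x)
    (hcrit : (q + k) * r * (q + r) ≤ (r - 2 * k) * (x * (x + r))) : ¬ (P k q r).IsRoot x := by
  have hkr : (2 * k : ℝ) < r := by exact_mod_cast hr
  have hlt := pow_mul_pow_lt_of_critical hq hkr hx hcrit
  rw [IsRoot, eval_P, sub_eq_zero]
  exact_mod_cast hlt.ne'

lemma rootMultiplicity_P_le_one (hk : 0 < k) (hq : 0 < q) (hr : 2 * k < r) (z : ℂ) :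
    (P k q r).rootMultiplicity z ≤ 1 := by
  by_contra! hz
  obtain ⟨h₀, h₁⟩ := (one_lt_rootMultiplicity_iff_isRoot (fun h => by simp [h] at hz)).1 hz
  have hquad := mul_add_eq_of_isRoot_derivative hk hq (by omega) h₀ h₁
  have hkr : (2 * k : ℝ) < r := by exact_mod_cast hr
  have hk' : (0 : ℝ) < k := by exact_mod_cast hk
  have hq' : (0 : ℝ) < q := by exact_mod_cast hq
  set d : ℝ := (q + k) * r * (q + r) / (r - 2 * k)
  have hd : (r - 2 * k) * d = (q + k) * r * (q + r) := mul_div_cancel₀ _ (by linarith)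
  have hqd : q * (q + r) < d := by
    rw [lt_div_iff₀ (by linarith)]
    nlinarith [mul_pos hk' (by positivity : (0 : ℝ) < r + 2 * q)]
  obtain ⟨x, hx, hxd⟩ := exists_gt_mul_add_eq hq'.le (by positivity) hqd
  have hcrit : (q + k) * r * (q + r) ≤ (r - 2 * k) * (x * (x + r)) := by rw [hxd, hd]
  have hzx : z * (z + r) = x * (x + r) := by
    refine mul_left_cancel₀ (sub_ne_zero.2 ?_ : (r : ℂ) - 2 * k ≠ 0) ?_
    · exact_mod_cast hkr.ne'
    · rw [hquad]
      exact_mod_cast (hxd ▸ hd).symm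
  rcases eq_or_eq_neg_sub_of_mul_add_eq hzx with rfl | rfl
  · exact not_isRoot_ofReal hq hr hx hcrit h₀
  · exact not_isRoot_ofReal hq hr hx hcrit (by simpa using isRoot_neg_sub h₀)

noncomputable def Phi (k q r : ℕ) (t : ℝ) : ℝ :=
  q * π - 2 * (q + k) * arctan (t / (r / 2)) + 2 * k * arctan (t / (r / 2 + q))

lemma hasDerivAt_Phi (hr : 0 < r) (t : ℝ) : HasDerivAt (Phi k q r)
    (2 * k * ((r / 2 + q) / ((r / 2 + q) ^ 2 + t ^ 2)) -
      2 * (q + k) * (r / 2 / ((r / 2) ^ 2 + t ^ 2))) t := by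
  have hr' : (0 : ℝ) < r := by exact_mod_cast hr
  have h₁ := hasDerivAt_arctan_div (by positivity : (r / 2 : ℝ) ≠ 0) t
  have h₂ := hasDerivAt_arctan_div (by positivity : (r / 2 + q : ℝ) ≠ 0) t
  exact (((hasDerivAt_const t _).sub (h₁.const_mul _)).add (h₂.const_mul _)).congr_deriv
    (by ring)

lemma strictAnti_Phi (hq : 0 < q) (hr : 2 * k < r) : StrictAnti (Phi k q r) := by
  have hkr : (2 * k : ℝ) < r := by exact_mod_cast hr
  have hq' : (0 : ℝ) < q := by exact_mod_cast hq
  have hr' : (0 : ℝ) < r := by linarith [(by positivity : (0 : ℝ) ≤ k)]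
  refine strictAnti_of_deriv_neg fun t => ?_
  rw [(hasDerivAt_Phi (by omega) t).deriv, sub_neg, mul_div_assoc', mul_div_assoc',
    div_lt_div_iff₀ (by positivity) (by positivity)]
  nlinarith [mul_nonneg (sq_nonneg t) (mul_pos hq' (sub_pos.2 hkr)).le,
    mul_pos (mul_pos (mul_pos hr' hq') (by positivity : (0 : ℝ) < r / 2 + q))
      (by positivity : (0 : ℝ) < r / 2 + q + k)]

lemma continuous_Phi : Continuous (Phi k q r) := by
  unfold Phi; fun_prop

lemma tendsto_Phi_atTop (hr : 0 < r) : Tendsto (Phi k q r) atTop (𝓝 0) := by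
  have hr' : (0 : ℝ) < r := by exact_mod_cast hr
  have h := fun c (hc : (0 : ℝ) < c) =>
    (tendsto_arctan_atTop.mono_right nhdsWithin_le_nhds).comp (tendsto_id.atTop_div_const hc)
  rw [show (0 : ℝ) = q * π - 2 * (q + k) * (π / 2) + 2 * k * (π / 2) by ring]
  exact ((tendsto_const_nhds).sub ((h (r / 2) (by positivity)).const_mul _)).add
    ((h (r / 2 + q) (by positivity)).const_mul _)

lemma tendsto_Phi_atBot (hr : 0 < r) : Tendsto (Phi k q r) atBot (𝓝 (2 * π * q)) := by
  have hr' : (0 : ℝ) < r := by exact_mod_cast hr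
  have h := fun c (hc : (0 : ℝ) < c) =>
    (tendsto_arctan_atBot.mono_right nhdsWithin_le_nhds).comp (tendsto_id.atBot_div_const hc)
  rw [show 2 * π * q = q * π - 2 * (q + k) * -(π / 2) + 2 * k * -(π / 2) by ring]
  exact ((tendsto_const_nhds).sub ((h (r / 2) (by positivity)).const_mul _)).add
    ((h (r / 2 + q) (by positivity)).const_mul _)

lemma range_Phi (hq : 0 < q) (hr : 2 * k < r) : range (Phi k q r) = Ioo 0 (2 * π * q) :=
  (strictAnti_Phi hq hr).range_eq_Ioo continuous_Phi (tendsto_Phi_atTop (by omega))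
    (tendsto_Phi_atBot (by omega))

lemma isRoot_P_mk_iff (hr : 0 < r) (t : ℝ) :
    (P k q r).IsRoot ⟨-r / 2, t⟩ ↔ ∃ j : ℤ, Phi k q r t = 2 * π * j := by
  have hr' : (0 : ℝ) < r := by exact_mod_cast hr
  set A : ℂ := ⟨r / 2, t⟩
  set B : ℂ := ⟨r / 2 + q, t⟩
  have hA : 0 < A.re := show (0 : ℝ) < r / 2 by positivity
  have hB : 0 < B.re := show (0 : ℝ) < r / 2 + q by positivity
  have h₁ : (⟨-r / 2, t⟩ : ℂ) + r = A :=
    Complex.ext (by simp only [Complex.add_re, Complex.natCast_re, A]; ring) (by simp [A])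
  have h₂ : (⟨-r / 2, t⟩ : ℂ) - q = -conj B :=
    Complex.ext
      (by simp only [Complex.sub_re, Complex.natCast_re, Complex.neg_re, Complex.conj_re, B]; ring)
      (by simp [B])
  have h₃ : (⟨-r / 2, t⟩ : ℂ) + q + r = B :=
    Complex.ext (by simp only [Complex.add_re, Complex.natCast_re, B]; ring) (by simp [B])
  have h₄ : (⟨-r / 2, t⟩ : ℂ) = -conj A :=
    Complex.ext (by simp only [Complex.neg_re, Complex.conj_re, A]; ring) (by simp [A])
  rw [IsRoot, eval_P, sub_eq_zero, h₁, h₂, h₃, h₄,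
    Complex.pow_mul_neg_conj_pow_eq_iff (fun h => by simp [h] at hA) (fun h => by simp [h] at hB),
    Complex.arg_eq_arctan hA, Complex.arg_eq_arctan hB]
  rfl

lemma ncard_isRoot_re_eq (hq : 0 < q) (hr : 2 * k < r) :
    {z | (P k q r).IsRoot z ∧ z.re = -r / 2}.ncard = q - 1 := by
  set S : Set ℝ := (fun j : ℤ => 2 * π * j) '' Ioo 0 q
  have hS : S ⊆ range (Phi k q r) := by
    rintro _ ⟨j, ⟨hj₀, hjq⟩, rfl⟩
    have : (0 : ℝ) < j := by exact_mod_cast hj₀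
    have : (j : ℝ) < q := by exact_mod_cast hjq
    rw [range_Phi hq hr]
    constructor <;> nlinarith [pi_pos]
  have hline : {z | (P k q r).IsRoot z ∧ z.re = -r / 2} =
      (fun t : ℝ => (⟨-r / 2, t⟩ : ℂ)) '' (Phi k q r ⁻¹' S) := by
    ext z
    constructor
    · rintro ⟨hz, hre⟩
      have hz' : (⟨-r / 2, z.im⟩ : ℂ) = z := Complex.ext hre.symm rfl
      obtain ⟨j, hj⟩ := (isRoot_P_mk_iff (by omega) z.im).1 (hz' ▸ hz)
      have hmem : Phi k q r z.im ∈ Ioo 0 (2 * π * q) := range_Phi hq hr ▸ mem_range_self _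
      rw [hj] at hmem
      refine ⟨z.im, ⟨j, ⟨?_, ?_⟩, hj.symm⟩, hz'⟩
      · exact_mod_cast pos_of_mul_pos_right hmem.1 (by positivity)
      · exact_mod_cast lt_of_mul_lt_mul_left hmem.2 (by positivity)
    · rintro ⟨t, ⟨j, -, hj⟩, rfl⟩
      exact ⟨(isRoot_P_mk_iff (by omega) t).2 ⟨j, hj.symm⟩, rfl⟩
  rw [hline, ncard_image_of_injective _ fun s t h => congrArg Complex.im h,
    ncard_preimage_of_injective_subset_range (strictAnti_Phi hq hr).injective hS,
    ncard_image_of_injective _ fun i j h => by exact_mod_cast mul_left_cancel₀ (by positivity) h,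
    ← Finset.coe_Ioo, ncard_coe_finset, Int.card_Ioo]
  omega

end PowerDifference

open PowerDifference in
theorem stmt_19 (k q r : ℕ) (hk : 2 ≤ k) (hq : 3 ≤ q) (hr : 2 * k < r) :
    (∀ z : ℂ, ((X + C (r : ℂ)) ^ (q + k) * (X - C (q : ℂ)) ^ k -
        X ^ (q + k) * (X + C ((q : ℂ) + r)) ^ k).rootMultiplicity z ≤ 1) ∧
    {z : ℂ | ((X + C (r : ℂ)) ^ (q + k) * (X - C (q : ℂ)) ^ k -
        X ^ (q + k) * (X + C ((q : ℂ) + r)) ^ k).IsRoot z ∧ -(r : ℝ) / 2 < z.re}.ncard = k := by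
  change (∀ z, (P k q r).rootMultiplicity z ≤ 1) ∧
    {z | (P k q r).IsRoot z ∧ -(r : ℝ) / 2 < z.re}.ncard = k
  have hmult := rootMultiplicity_P_le_one (q := q) (by omega) (by omega) hr
  refine ⟨hmult, ?_⟩
  have hdeg := natDegree_P (q := q) (by omega) hr
  have hP : P k q r ≠ 0 := fun h => by rw [h, natDegree_zero] at hdeg; omega
  have hcount := ncard_eq_two_mul_ncard_re_gt_add (finite_setOfPred_isRoot hP) (-r)
    fun z hz => by push_cast; exact isRoot_neg_sub hz
  simp only [mem_ofPred_eq] at hcount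
  rw [ncard_setOf_isRoot_eq_natDegree hP hmult, hdeg, ncard_isRoot_re_eq (q := q) (by omega) hr]
    at hcount
  omega
end
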